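/- Let Φ be a smooth 2-form on a smooth manifold N, let 𝓗 be a smooth distribution on N with a connection ∇ (a bilinear map taking vector fields X on N and sections of a bundle to sections) such that Φ is horizontal (Φ(X,Y) = 0 whenever X or Y is a section of a complement 𝓥 of 𝓗) and ∇_H Φ = 0 for all H ∈ 𝓗. If moreover for all sections X, Y of 𝓗 the torsion θ(X,Y) = ∇_X Y - ∇_Y X - [X,Y] takes values in 𝓥, then the horizontal exterior derivative vanishes on 𝓗: for all sections X₁, X₂, X₃ of 𝓗, X₁(Φ(X₂,X₃)) - X₂(Φ(X₁,X₃)) + X₃(Φ(X₁,X₂)) - Φ([X₁,X₂],X₃) + Φ([X₁,X₃],X₂) - Φ([X₂,X₃],X₁) = 0. -/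

import Mathlib

/-! Parallelism of `Φ` rewrites each derivative `Xᵢ(Φ(Xⱼ, Xₖ))` through `∇`, and since the torsion
of horizontal fields is vertical while `Φ` is horizontal, `Φ([X, Y], Z) = Φ(∇_X Y - ∇_Y X, Z)`.
After these substitutions the six terms cancel in pairs by antisymmetry of `Φ`. -/

theorem form_bracket_eq_of_torsion_vert {R F X : Type*} [CommRing R]
    [AddCommGroup F] [Module R F] [AddCommGroup X] [Module R X]
    (Φ : X →ₗ[R] X →ₗ[R] F) (Vert : X → Prop)
    (hvert : ∀ v z, Vert v → Φ v z = 0) (bracket nabla : X → X → X) {x y : X}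
    (htor : Vert (nabla x y - nabla y x - bracket x y)) (z : X) :
    Φ (bracket x y) z = Φ (nabla x y) z - Φ (nabla y x) z := by
  have h := hvert _ z htor
  simp only [map_sub, LinearMap.sub_apply] at h
  exact (sub_eq_zero.mp h).symm

theorem stmt18_general (F X : Type*) [AddCommGroup F] [Module ℝ F]
    [AddCommGroup X] [Module ℝ X]
    (act : X → F → F)
    (Φ : X →ₗ[ℝ] X →ₗ[ℝ] F)
    (hanti : ∀ x y, Φ x y = - Φ y x)
    (Horiz Vert : X → Prop)
    (bracket : X → X → X)
    (nabla : X → X → X)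
    (hvert : ∀ v z, Vert v → Φ v z = 0)
    (hpar : ∀ H Y Z, Horiz H → Horiz Y → Horiz Z →
      act H (Φ Y Z) = Φ (nabla H Y) Z + Φ Y (nabla H Z))
    (htor : ∀ x y, Horiz x → Horiz y → Vert (nabla x y - nabla y x - bracket x y)) :
    ∀ X₁ X₂ X₃, Horiz X₁ → Horiz X₂ → Horiz X₃ →
      act X₁ (Φ X₂ X₃) - act X₂ (Φ X₁ X₃) + act X₃ (Φ X₁ X₂)
        - Φ (bracket X₁ X₂) X₃ + Φ (bracket X₁ X₃) X₂ - Φ (bracket X₂ X₃) X₁ = 0 := by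
  intro X₁ X₂ X₃ h₁ h₂ h₃
  have bracket_eq {x y : X} :=
    form_bracket_eq_of_torsion_vert (x := x) (y := y) Φ Vert hvert bracket nabla
  rw [hpar X₁ X₂ X₃ h₁ h₂ h₃, hpar X₂ X₁ X₃ h₂ h₁ h₃, hpar X₃ X₁ X₂ h₃ h₁ h₂,
    bracket_eq (htor X₁ X₂ h₁ h₂), bracket_eq (htor X₁ X₃ h₁ h₃), bracket_eq (htor X₂ X₃ h₂ h₃),
    hanti X₂ (nabla X₁ X₃), hanti X₁ (nabla X₂ X₃), hanti X₁ (nabla X₃ X₂)]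
  abel

theorem stmt18 (F X : Type*) [AddCommGroup F] [Module ℝ F]
    [AddCommGroup X] [Module ℝ X]
    (act : X → F → F)
    (Φ : X →ₗ[ℝ] X →ₗ[ℝ] F)
    (hanti : ∀ x y, Φ x y = - Φ y x)
    (Horiz Vert : X → Prop)
    (bracket : X → X → X)
    (nabla : X → X → X)
    (hvert : ∀ v z, Vert v → Φ v z = 0)
    (hvert' : ∀ z v, Vert v → Φ z v = 0)
    (hpar : ∀ H Y Z, Horiz H → Horiz Y → Horiz Z →
      act H (Φ Y Z) = Φ (nabla H Y) Z + Φ Y (nabla H Z))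
    (htor : ∀ x y, Horiz x → Horiz y → Vert (nabla x y - nabla y x - bracket x y)) :
    ∀ X₁ X₂ X₃, Horiz X₁ → Horiz X₂ → Horiz X₃ →
      act X₁ (Φ X₂ X₃) - act X₂ (Φ X₁ X₃) + act X₃ (Φ X₁ X₂)
        - Φ (bracket X₁ X₂) X₃ + Φ (bracket X₁ X₃) X₂ - Φ (bracket X₂ X₃) X₁ = 0 :=
  stmt18_general F X act Φ hanti Horiz Vert bracket nabla hvert hpar htor
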